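/- Γ(15/62) · Γ(23/62) · Γ(27/62) · Γ(29/62) · Γ(61/62) = 2 · π^{5/2}. -/

import Mathlib

/-!
Reflection `Γ(s)Γ(1 - s) = π / sin(πs)` pairs the coset `{15, 23, 27, 29, 61}` with the subgroup
`⟨33⟩ = {1, 33, 35, 39, 47} = 62 - {15, 23, 27, 29, 61}`, so the product is `π⁵` divided by a product
of sines and by the Gamma product over `⟨33⟩`. Since `2ᵏ/31 + 1/2 = (2ᵏ⁺¹ + 31)/62`, Legendre
duplication along the doubling orbit `1/31, 2/31, …, 16/31` of `2` modulo `31` telescopes the latter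
to `16 π^{5/2}` (the orbit closes because `32/31 = 1 + 1/31`). The sines are `sin(π/62)` and
`cos(2ᵏπ/62)` for `k = 1, …, 4`, and `sin x cos x ⋯ cos 16x = sin 32x / 32 = cos x / 32` at `x = π/62`.
-/

open Real Finset

theorem Real.sin_two_pow_mul (x : ℝ) (n : ℕ) :
    sin (2 ^ n * x) = 2 ^ n * sin x * ∏ k ∈ range n, cos (2 ^ k * x) := by
  induction n with
  | zero => simp
  | succ n ih =>
    rw [pow_succ', mul_assoc, sin_two_mul, ih, prod_range_succ]
    ring

theorem Real.Gamma_mul_prod_Gamma_two_pow_mul_add_half (s : ℝ) (n : ℕ) :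
    Gamma s * ∏ k ∈ range n, Gamma (2 ^ k * s + 1 / 2) =
      Gamma (2 ^ n * s) * 2 ^ (n - 2 * (2 ^ n - 1) * s) * √π ^ n := by
  induction n with
  | zero => simp
  | succ n ih =>
    have hexp : (2 : ℝ) ^ (1 - 2 * (2 ^ n * s)) * 2 ^ ((n : ℝ) - 2 * (2 ^ n - 1) * s) =
        2 ^ (((n + 1 : ℕ) : ℝ) - 2 * (2 ^ (n + 1) - 1) * s) := by
      rw [← rpow_add two_pos]
      push_cast
      ring_nf
    calc Gamma s * ∏ k ∈ range (n + 1), Gamma (2 ^ k * s + 1 / 2)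
        = Gamma (2 ^ n * s) * Gamma (2 ^ n * s + 1 / 2) *
            2 ^ ((n : ℝ) - 2 * (2 ^ n - 1) * s) * √π ^ n := by
          rw [prod_range_succ, ← mul_assoc, ih]
          ring
      _ = Gamma (2 ^ (n + 1) * s) * 2 ^ (((n + 1 : ℕ) : ℝ) - 2 * (2 ^ (n + 1) - 1) * s) *
            √π ^ (n + 1) := by
          rw [Gamma_mul_Gamma_add_half, ← hexp, pow_succ', mul_assoc (2 : ℝ) (2 ^ n) s]
          ring

theorem Real.prod_Gamma_mul_prod_Gamma_one_sub_mul_prod_sin {ι : Type*} (s : Finset ι)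
    (a : ι → ℝ) (ha : ∀ i ∈ s, sin (π * a i) ≠ 0) :
    (∏ i ∈ s, Gamma (a i)) * (∏ i ∈ s, Gamma (1 - a i)) * ∏ i ∈ s, sin (π * a i) = π ^ #s := by
  rw [← prod_mul_distrib, ← prod_mul_distrib, ← prod_const]
  refine prod_congr rfl fun i hi => ?_
  rw [Gamma_mul_Gamma_one_sub, div_mul_cancel₀ _ (ha i hi)]

theorem prod_sin_coset15_62 :
    sin (π * (15 / 62)) * sin (π * (23 / 62)) * sin (π * (27 / 62)) * sin (π * (29 / 62)) *
      sin (π * (61 / 62)) = 1 / 32 := by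
  set x := π / 62 with hx
  have hdouble := sin_two_pow_mul x 5
  have h32 : sin (2 ^ 5 * x) = cos x := by
    rw [show 2 ^ 5 * x = x + π / 2 by ring, sin_add_pi_div_two]
  have hcos : cos x ≠ 0 := (cos_pos_of_mem_Ioo ⟨by linarith [pi_pos], by linarith [pi_pos]⟩).ne'
  have hcompl : ∀ m : ℝ, sin (π * ((31 - m) / 62)) = cos (m * x) := fun m => by
    rw [← sin_pi_div_two_sub, hx]; ring_nf
  rw [show sin (π * (61 / 62)) = sin x by rw [← sin_pi_sub, hx]; ring_nf]
  rw [show (15 : ℝ) = 31 - 16 by norm_num, show (23 : ℝ) = 31 - 8 by norm_num,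
    show (27 : ℝ) = 31 - 4 by norm_num, show (29 : ℝ) = 31 - 2 by norm_num]
  simp only [hcompl]
  simp only [prod_range_succ, prod_range_zero, h32] at hdouble
  apply mul_left_cancel₀ hcos
  norm_num at hdouble
  linear_combination -hdouble / 32

theorem prod_Gamma_coset1_62 :
    Gamma (1 / 62) * Gamma (33 / 62) * Gamma (35 / 62) * Gamma (39 / 62) * Gamma (47 / 62) =
      16 * √π ^ 5 := by
  have hdup := Gamma_mul_prod_Gamma_two_pow_mul_add_half (1 / 31) 5
  have h63 : Gamma (63 / 62) = Gamma (1 / 62) / 62 := by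
    rw [show (63 / 62 : ℝ) = 1 / 62 + 1 by norm_num, Gamma_add_one (by norm_num)]; ring
  have h32 : Gamma (32 / 31) = Gamma (1 / 31) / 31 := by
    rw [show (32 / 31 : ℝ) = 1 / 31 + 1 by norm_num, Gamma_add_one (by norm_num)]; ring
  have hpow : (2 : ℝ) ^ ((5 : ℕ) - 2 * (2 ^ 5 - 1) * (1 / 31) : ℝ) = 8 := by
    norm_num
  rw [hpow] at hdup
  simp only [prod_range_succ, prod_range_zero] at hdup
  norm_num at hdup
  rw [h63, h32] at hdup
  have hΓ : Gamma (1 / 31) ≠ 0 := (Gamma_pos_of_pos (by norm_num)).ne'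
  apply mul_left_cancel₀ hΓ
  linear_combination 62 * hdup

theorem gamma_product_62_coset15 :
    Real.Gamma (15 / 62) * Real.Gamma (23 / 62) * Real.Gamma (27 / 62) *
        Real.Gamma (29 / 62) * Real.Gamma (61 / 62) =
      2 * Real.pi ^ ((5 : ℝ) / 2) := by
  have hsin : ∀ i ∈ (univ : Finset (Fin 5)),
      sin (π * ![15 / 62, 23 / 62, 27 / 62, 29 / 62, 61 / 62] i) ≠ 0 := fun i _ => by
    refine (sin_pos_of_pos_of_lt_pi ?_ ?_).ne' <;> fin_cases i <;> simp <;> linarith [pi_pos]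
  have hrefl := prod_Gamma_mul_prod_Gamma_one_sub_mul_prod_sin _ _ hsin
  norm_num [Fin.prod_univ_succ] at hrefl
  have hsqrt : π ^ ((5 : ℝ) / 2) = √π ^ 5 := by
    rw [sqrt_eq_rpow, ← rpow_natCast, ← rpow_mul pi_pos.le]
    norm_num
  have hpi : π ^ 5 = √π ^ 5 * √π ^ 5 := by
    rw [← mul_pow, mul_self_sqrt pi_pos.le]
  have hne : √π ^ 5 ≠ 0 := by positivity
  rw [hsqrt]
  refine mul_right_cancel₀ hne ?_
  have hS := prod_sin_coset15_62
  have hB := prod_Gamma_coset1_62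
  set A := Gamma (15 / 62) * Gamma (23 / 62) * Gamma (27 / 62) * Gamma (29 / 62) * Gamma (61 / 62)
  set B := Gamma (1 / 62) * Gamma (33 / 62) * Gamma (35 / 62) * Gamma (39 / 62) * Gamma (47 / 62)
  linear_combination 2 * hrefl + 2 * hpi - 2 * A * B * hS - A / 16 * hB
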